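/- Let Q be an inverse quantal frame, i.e. a supported quantale whose underlying complete lattice is a frame and in which ⨆ Π(Q) = 1. Then the inverse monoid Π(Q) of partial units is an abstract complete pseudogroup, and the map ε : ℒ_c(Π(Q)) → Q defined by ε(U) = ⨆U is an isomorphism of unital involutive quantales: ε is a bijection that preserves arbitrary suprema and binary meets, satisfies ε(U V) = ε(U) ε(V) for the pointwise product U V = {u v : u ∈ U, v ∈ V}, maps the unit {a ∈ Π(Q) : a ≤ e} of ℒ_c(Π(Q)) to e, and satisfies ε({u* : u ∈ U}) = ε(U)*. -/

import Mathlib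

/-- A partial unit in a unital involutive quantale. -/
def IsPartialUnit {Q : Type*} [CompleteLattice Q]
    (m : Q → Q → Q) (e : Q) (st : Q → Q) (a : Q) : Prop :=
  m a (st a) ≤ e ∧ m (st a) a ≤ e

/-- Compatibility of two partial units: `s t*` and `s* t` are idempotent. -/
def PUCompatible {Q : Type*} [CompleteLattice Q]
    (m : Q → Q → Q) (st : Q → Q) (a b : Q) : Prop :=
  m (m a (st b)) (m a (st b)) = m a (st b) ∧
  m (m (st a) b) (m (st a) b) = m (st a) b

/-- A downwards closed subset of the inverse monoid `Π(Q)` of partial units (whose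
natural order is the order inherited from `Q`). -/
def PUDwClosed {Q : Type*} [CompleteLattice Q]
    (m : Q → Q → Q) (e : Q) (st : Q → Q) (U : Set Q) : Prop :=
  U ⊆ {a : Q | IsPartialUnit m e st a} ∧
  ∀ a b : Q, IsPartialUnit m e st a → a ≤ b → b ∈ U → a ∈ U

/-- A compatibly closed ideal of `Π(Q)`: a downwards closed set of partial units
containing the join of each of its compatible subsets. -/
def PUCCIdeal {Q : Type*} [CompleteLattice Q]
    (m : Q → Q → Q) (e : Q) (st : Q → Q) (U : Set Q) : Prop :=
  PUDwClosed m e st U ∧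
  ∀ X : Set Q, X ⊆ U → (∀ a ∈ X, ∀ b ∈ X, PUCompatible m st a b) → sSup X ∈ U

/-!
Since `⨆ Π(Q) = 1`, frame distributivity writes every `a` as the join of the partial units
below it. The support gives `a ≤ a a* a`, which forces elements below `e` to be self-adjoint
idempotents; hence an idempotent partial unit lies below `e`, and any two partial units below a
common partial unit `u` are compatible. So a compatibly closed ideal `U` contains every partial
unit `u ≤ ⨆ U`, as the compatible join `u = ⨆ {u ⊓ v | v ∈ U}`. Therefore `ε` is inverted by
`a ↦ ↓a ∩ Π(Q)`, and the quantale laws transfer along `ε` by distributivity.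
-/

structure IsUnitalInvolutiveQuantale {Q : Type*} [CompleteLattice Q]
    (m : Q → Q → Q) (e : Q) (st : Q → Q) : Prop where
  mul_assoc : ∀ a b c : Q, m (m a b) c = m a (m b c)
  mul_sSup : ∀ (a : Q) (T : Set Q), m a (sSup T) = sSup ((fun b => m a b) '' T)
  sSup_mul : ∀ (b : Q) (T : Set Q), m (sSup T) b = sSup ((fun a => m a b) '' T)
  one_mul : ∀ a : Q, m e a = a
  mul_one : ∀ a : Q, m a e = a
  star_sSup : ∀ T : Set Q, st (sSup T) = sSup (st '' T)
  star_star : ∀ a : Q, st (st a) = a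
  star_mul : ∀ a b : Q, st (m a b) = m (st b) (st a)

/-- The principal compatibly closed ideal `↓a ∩ Π(Q)`, the inverse image of `a` under `ε`. -/
def partialUnitsBelow {Q : Type*} [CompleteLattice Q]
    (m : Q → Q → Q) (e : Q) (st : Q → Q) (a : Q) : Set Q :=
  {x : Q | IsPartialUnit m e st x ∧ x ≤ a}

theorem PUCCIdeal.inter {Q : Type*} [CompleteLattice Q] {m : Q → Q → Q} {e : Q}
    {st : Q → Q} {U V : Set Q} (hU : PUCCIdeal m e st U) (hV : PUCCIdeal m e st V) :
    PUCCIdeal m e st (U ∩ V) :=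
  ⟨⟨fun _ hx => hU.1.1 hx.1,
      fun a b ha hab hb => ⟨hU.1.2 a b ha hab hb.1, hV.1.2 a b ha hab hb.2⟩⟩,
    fun X hX hc => ⟨hU.2 X (fun _ hx => (hX hx).1) hc, hV.2 X (fun _ hx => (hX hx).2) hc⟩⟩

namespace IsUnitalInvolutiveQuantale

section CompleteLattice

variable {Q : Type*} [CompleteLattice Q] {m : Q → Q → Q} {e : Q} {st : Q → Q}

theorem mul_le_mul_left (hQ : IsUnitalInvolutiveQuantale m e st) (c : Q) {a b : Q}
    (h : a ≤ b) : m c a ≤ m c b :=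
  OrderHomClass.mono (⟨m c, hQ.mul_sSup c⟩ : sSupHom Q Q) h

theorem mul_le_mul_right (hQ : IsUnitalInvolutiveQuantale m e st) (c : Q) {a b : Q}
    (h : a ≤ b) : m a c ≤ m b c :=
  OrderHomClass.mono (⟨fun x => m x c, hQ.sSup_mul c⟩ : sSupHom Q Q) h

theorem star_le_star (hQ : IsUnitalInvolutiveQuantale m e st) {a b : Q} (h : a ≤ b) :
    st a ≤ st b :=
  OrderHomClass.mono (⟨st, hQ.star_sSup⟩ : sSupHom Q Q) h

theorem mul_le_mul (hQ : IsUnitalInvolutiveQuantale m e st) {a b c d : Q} (hab : a ≤ b)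
    (hcd : c ≤ d) : m a c ≤ m b d :=
  (hQ.mul_le_mul_right c hab).trans (hQ.mul_le_mul_left b hcd)

theorem star_one (hQ : IsUnitalInvolutiveQuantale m e st) : st e = e := by
  calc st e = m (st e) (st (st e)) := by rw [hQ.star_star, hQ.mul_one]
    _ = st (m (st e) e) := (hQ.star_mul _ _).symm
    _ = e := by rw [hQ.mul_one, hQ.star_star]

theorem sSup_image2_mul (hQ : IsUnitalInvolutiveQuantale m e st) (U V : Set Q) :
    sSup (Set.image2 m U V) = m (sSup U) (sSup V) := by
  rw [sSup_image2, hQ.sSup_mul, sSup_image]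
  simp_rw [hQ.mul_sSup, sSup_image]

theorem isPartialUnit_one (hQ : IsUnitalInvolutiveQuantale m e st) :
    IsPartialUnit m e st e := by
  simp only [IsPartialUnit, hQ.star_one, hQ.one_mul, le_refl, and_self]

theorem isPartialUnit_star (hQ : IsUnitalInvolutiveQuantale m e st) {a : Q}
    (ha : IsPartialUnit m e st a) : IsPartialUnit m e st (st a) := by
  rw [IsPartialUnit, hQ.star_star]
  exact ha.symm

theorem isPartialUnit_mul (hQ : IsUnitalInvolutiveQuantale m e st) {a b : Q}
    (ha : IsPartialUnit m e st a) (hb : IsPartialUnit m e st b) :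
    IsPartialUnit m e st (m a b) := by
  constructor
  · calc m (m a b) (st (m a b)) = m a (m (m b (st b)) (st a)) := by
          rw [hQ.star_mul, hQ.mul_assoc, hQ.mul_assoc]
      _ ≤ m a (m e (st a)) := hQ.mul_le_mul_left a (hQ.mul_le_mul_right (st a) hb.1)
      _ ≤ e := by rw [hQ.one_mul]; exact ha.1
  · calc m (st (m a b)) (m a b) = m (st b) (m (m (st a) a) b) := by
          rw [hQ.star_mul, hQ.mul_assoc, hQ.mul_assoc]
      _ ≤ m (st b) (m e b) := hQ.mul_le_mul_left (st b) (hQ.mul_le_mul_right b ha.2)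
      _ ≤ e := by rw [hQ.one_mul]; exact hb.2

theorem isPartialUnit_of_le (hQ : IsUnitalInvolutiveQuantale m e st) {a b : Q} (hab : a ≤ b)
    (hb : IsPartialUnit m e st b) : IsPartialUnit m e st a :=
  ⟨(hQ.mul_le_mul hab (hQ.star_le_star hab)).trans hb.1,
    (hQ.mul_le_mul (hQ.star_le_star hab) hab).trans hb.2⟩

theorem isPartialUnit_sSup (hQ : IsUnitalInvolutiveQuantale m e st) {X : Set Q}
    (h₁ : ∀ x ∈ X, ∀ y ∈ X, m x (st y) ≤ e) (h₂ : ∀ x ∈ X, ∀ y ∈ X, m (st x) y ≤ e) :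
    IsPartialUnit m e st (sSup X) := by
  rw [IsPartialUnit, hQ.star_sSup, ← hQ.sSup_image2_mul, ← hQ.sSup_image2_mul]
  exact ⟨sSup_le (Set.forall_mem_image2.2 fun x hx _ ⟨y, hy, hxy⟩ => hxy ▸ h₁ x hx y hy),
    sSup_le (Set.forall_mem_image2.2 fun _ ⟨x, hx, hxy⟩ y hy => hxy ▸ h₂ x hx y hy)⟩

theorem le_mul_star_mul_of_support (hQ : IsUnitalInvolutiveQuantale m e st) {sp : Q → Q}
    (hsp2 : ∀ a : Q, sp a ≤ m a (st a)) (hsp3 : ∀ a : Q, a ≤ m (sp a) a) (a : Q) :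
    a ≤ m (m a (st a)) a :=
  (hsp3 a).trans (hQ.mul_le_mul_right a (hsp2 a))

theorem star_eq_self_of_le_one (hQ : IsUnitalInvolutiveQuantale m e st)
    (hreg : ∀ a : Q, a ≤ m (m a (st a)) a) {a : Q} (ha : a ≤ e) : st a = a := by
  have le_star : ∀ b : Q, b ≤ e → b ≤ st b := fun b hb =>
    calc b ≤ m (m b (st b)) b := hreg b
      _ ≤ m (m e (st b)) e := hQ.mul_le_mul (hQ.mul_le_mul_right (st b) hb) hb
      _ = st b := by rw [hQ.mul_one, hQ.one_mul]
  have hsta : st a ≤ e := (hQ.star_le_star ha).trans_eq hQ.star_one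
  exact le_antisymm ((le_star (st a) hsta).trans_eq (hQ.star_star a)) (le_star a ha)

theorem mul_self_eq_of_le_one (hQ : IsUnitalInvolutiveQuantale m e st)
    (hreg : ∀ a : Q, a ≤ m (m a (st a)) a) {a : Q} (ha : a ≤ e) : m a a = a := by
  refine le_antisymm ((hQ.mul_le_mul_left a ha).trans_eq (hQ.mul_one a)) ?_
  calc a ≤ m (m a (st a)) a := hreg a
    _ ≤ m (m a a) e := by rw [hQ.star_eq_self_of_le_one hreg ha]; exact hQ.mul_le_mul_left _ ha
    _ = m a a := hQ.mul_one _

theorem le_one_of_mul_self_eq (hQ : IsUnitalInvolutiveQuantale m e st)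
    (hreg : ∀ a : Q, a ≤ m (m a (st a)) a) {f : Q} (hf : IsPartialUnit m e st f)
    (hff : m f f = f) : f ≤ e := by
  have hfst : m f (st f) ≤ st f :=
    calc m f (st f) = m f (st (m f f)) := by rw [hff]
      _ = m (m f (st f)) (st f) := by rw [hQ.star_mul, hQ.mul_assoc]
      _ ≤ m e (st f) := hQ.mul_le_mul_right (st f) hf.1
      _ = st f := hQ.one_mul _
  calc f ≤ m (m f (st f)) f := hreg f
    _ ≤ m (st f) f := hQ.mul_le_mul_right f hfst
    _ ≤ e := hf.2

theorem pUCompatible_iff (hQ : IsUnitalInvolutiveQuantale m e st)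
    (hreg : ∀ a : Q, a ≤ m (m a (st a)) a) {a b : Q} (ha : IsPartialUnit m e st a)
    (hb : IsPartialUnit m e st b) :
    PUCompatible m st a b ↔ m a (st b) ≤ e ∧ m (st a) b ≤ e := by
  refine ⟨fun h => ⟨?_, ?_⟩, fun h => ⟨?_, ?_⟩⟩
  · exact hQ.le_one_of_mul_self_eq hreg (hQ.isPartialUnit_mul ha (hQ.isPartialUnit_star hb)) h.1
  · exact hQ.le_one_of_mul_self_eq hreg (hQ.isPartialUnit_mul (hQ.isPartialUnit_star ha) hb) h.2
  · exact hQ.mul_self_eq_of_le_one hreg h.1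
  · exact hQ.mul_self_eq_of_le_one hreg h.2

theorem pUCompatible_of_le (hQ : IsUnitalInvolutiveQuantale m e st)
    (hreg : ∀ a : Q, a ≤ m (m a (st a)) a) {u a b : Q} (hu : IsPartialUnit m e st u)
    (ha : a ≤ u) (hb : b ≤ u) : PUCompatible m st a b :=
  (hQ.pUCompatible_iff hreg (hQ.isPartialUnit_of_le ha hu) (hQ.isPartialUnit_of_le hb hu)).2
    ⟨(hQ.mul_le_mul ha (hQ.star_le_star hb)).trans hu.1,
      (hQ.mul_le_mul (hQ.star_le_star ha) hb).trans hu.2⟩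

theorem isPartialUnit_sSup_of_pUCompatible (hQ : IsUnitalInvolutiveQuantale m e st)
    (hreg : ∀ a : Q, a ≤ m (m a (st a)) a) {X : Set Q}
    (hX : X ⊆ {a : Q | IsPartialUnit m e st a})
    (hc : ∀ a ∈ X, ∀ b ∈ X, PUCompatible m st a b) : IsPartialUnit m e st (sSup X) :=
  hQ.isPartialUnit_sSup
    (fun a ha b hb => ((hQ.pUCompatible_iff hreg (hX ha) (hX hb)).1 (hc a ha b hb)).1)
    (fun a ha b hb => ((hQ.pUCompatible_iff hreg (hX ha) (hX hb)).1 (hc a ha b hb)).2)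

theorem pUCCIdeal_partialUnitsBelow (hQ : IsUnitalInvolutiveQuantale m e st)
    (hreg : ∀ a : Q, a ≤ m (m a (st a)) a) (a : Q) :
    PUCCIdeal m e st (partialUnitsBelow m e st a) :=
  ⟨⟨fun _ hx => hx.1, fun _ _ hx hxy hy => ⟨hx, hxy.trans hy.2⟩⟩,
    fun _ hX hc => ⟨hQ.isPartialUnit_sSup_of_pUCompatible hreg (fun _ hx => (hX hx).1) hc,
      sSup_le fun _ hx => (hX hx).2⟩⟩

theorem sSup_eq_of_isLeast_pUCCIdeal (hQ : IsUnitalInvolutiveQuantale m e st)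
    (hreg : ∀ a : Q, a ≤ m (m a (st a)) a) {S W : Set Q}
    (hS : S ⊆ {a : Q | IsPartialUnit m e st a})
    (hW : IsLeast {W' : Set Q | PUCCIdeal m e st W' ∧ S ⊆ W'} W) : sSup W = sSup S := by
  have hW_le : W ⊆ partialUnitsBelow m e st (sSup S) :=
    hW.2 ⟨hQ.pUCCIdeal_partialUnitsBelow hreg _, fun _ hx => ⟨hS hx, le_sSup hx⟩⟩
  exact le_antisymm (sSup_le fun _ hx => (hW_le hx).2) (sSup_le_sSup hW.1.2)

end CompleteLattice

section Frame

variable {Q : Type*} [Order.Frame Q] {m : Q → Q → Q} {e : Q} {st : Q → Q}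

theorem sSup_partialUnitsBelow (hQ : IsUnitalInvolutiveQuantale m e st)
    (hcover : sSup {x : Q | IsPartialUnit m e st x} = ⊤) (a : Q) :
    sSup (partialUnitsBelow m e st a) = a := by
  refine le_antisymm (sSup_le fun _ hx => hx.2) ?_
  calc a = a ⊓ sSup {x : Q | IsPartialUnit m e st x} := by rw [hcover, inf_top_eq]
    _ = ⨆ b ∈ {x : Q | IsPartialUnit m e st x}, a ⊓ b := inf_sSup_eq
    _ ≤ sSup (partialUnitsBelow m e st a) :=
      iSup₂_le fun _ hb => le_sSup ⟨hQ.isPartialUnit_of_le inf_le_right hb, inf_le_left⟩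

theorem mem_of_le_sSup_of_pUCCIdeal (hQ : IsUnitalInvolutiveQuantale m e st)
    (hreg : ∀ a : Q, a ≤ m (m a (st a)) a) {U : Set Q} (hU : PUCCIdeal m e st U) {u : Q}
    (hu : IsPartialUnit m e st u) (hle : u ≤ sSup U) : u ∈ U := by
  have hXU : (u ⊓ ·) '' U ⊆ U := by
    rintro _ ⟨v, hv, rfl⟩
    exact hU.1.2 _ v (hQ.isPartialUnit_of_le inf_le_left hu) inf_le_right hv
  have hXc : ∀ a ∈ (u ⊓ ·) '' U, ∀ b ∈ (u ⊓ ·) '' U, PUCompatible m st a b := by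
    rintro _ ⟨v, -, rfl⟩ _ ⟨w, -, rfl⟩
    exact hQ.pUCompatible_of_le hreg hu inf_le_left inf_le_left
  have hsX : sSup ((u ⊓ ·) '' U) = u := by
    rw [sSup_image, ← inf_sSup_eq, inf_eq_left.2 hle]
  simpa only [hsX] using hU.2 _ hXU hXc

theorem eq_of_sSup_eq_of_pUCCIdeal (hQ : IsUnitalInvolutiveQuantale m e st)
    (hreg : ∀ a : Q, a ≤ m (m a (st a)) a) {U V : Set Q} (hU : PUCCIdeal m e st U)
    (hV : PUCCIdeal m e st V) (h : sSup U = sSup V) : U = V :=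
  Set.Subset.antisymm
    (fun _ hu => hQ.mem_of_le_sSup_of_pUCCIdeal hreg hV (hU.1.1 hu) ((le_sSup hu).trans_eq h))
    (fun _ hv => hQ.mem_of_le_sSup_of_pUCCIdeal hreg hU (hV.1.1 hv) ((le_sSup hv).trans_eq h.symm))

theorem sSup_inter_of_pUDwClosed (hQ : IsUnitalInvolutiveQuantale m e st) {U V : Set Q}
    (hU : PUDwClosed m e st U) (hV : PUDwClosed m e st V) :
    sSup (U ∩ V) = sSup U ⊓ sSup V := by
  refine le_antisymm (le_inf (sSup_le_sSup Set.inter_subset_left)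
    (sSup_le_sSup Set.inter_subset_right)) ?_
  rw [sSup_inf_sSup]
  refine iSup₂_le fun ⟨u, v⟩ ⟨hu, hv⟩ => le_sSup ?_
  have huv : IsPartialUnit m e st (u ⊓ v) := hQ.isPartialUnit_of_le inf_le_left (hU.1 hu)
  exact ⟨hU.2 _ u huv inf_le_left hu, hV.2 _ v huv inf_le_right hv⟩

end Frame

end IsUnitalInvolutiveQuantale

theorem stmt_19_general {Q : Type*} [Order.Frame Q]
    (m : Q → Q → Q) (e : Q) (st : Q → Q) (sp : Q → Q)
    (hassoc : ∀ a b c : Q, m (m a b) c = m a (m b c))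
    (hdistl : ∀ (a : Q) (T : Set Q), m a (sSup T) = sSup ((fun b => m a b) '' T))
    (hdistr : ∀ (b : Q) (T : Set Q), m (sSup T) b = sSup ((fun a => m a b) '' T))
    (hel : ∀ a : Q, m e a = a) (her : ∀ a : Q, m a e = a)
    (hstsup : ∀ T : Set Q, st (sSup T) = sSup (st '' T))
    (hstst : ∀ a : Q, st (st a) = a)
    (hstm : ∀ a b : Q, st (m a b) = m (st b) (st a))
    (hsp2 : ∀ a : Q, sp a ≤ m a (st a))
    (hsp3 : ∀ a : Q, a ≤ m (sp a) a)
    (hcover : sSup {x : Q | IsPartialUnit m e st x} = ⊤) :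
    -- Π(Q) is an abstract complete pseudogroup:
    -- it is closed under the unit, multiplication and involution,
    (IsPartialUnit m e st e ∧
      (∀ a b : Q, IsPartialUnit m e st a → IsPartialUnit m e st b →
        IsPartialUnit m e st (m a b)) ∧
      (∀ a : Q, IsPartialUnit m e st a → IsPartialUnit m e st (st a))) ∧
    -- it is complete: the join (taken in Q) of a compatible set of partial units is a
    -- partial unit,
    (∀ X : Set Q, X ⊆ {a : Q | IsPartialUnit m e st a} →
      (∀ a ∈ X, ∀ b ∈ X, PUCompatible m st a b) → IsPartialUnit m e st (sSup X)) ∧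
    -- and it is infinitely distributive
    (∀ (s : Q) (X : Set Q), m s (sSup X) = sSup ((fun x => m s x) '' X) ∧
      m (sSup X) s = sSup ((fun x => m x s) '' X)) ∧
    -- ε is a bijection from the compatibly closed ideals of Π(Q) onto Q
    (∀ a : Q, ∃ U : Set Q, PUCCIdeal m e st U ∧ sSup U = a) ∧
    (∀ U V : Set Q, PUCCIdeal m e st U → PUCCIdeal m e st V →
      sSup U = sSup V → U = V) ∧
    -- ε preserves arbitrary suprema (the supremum in ℒ_c(Π(Q)) of a family T being the
    -- least compatibly closed ideal containing ⋃₀ T)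
    (∀ (T : Set (Set Q)) (W : Set Q), (∀ U ∈ T, PUCCIdeal m e st U) →
      PUCCIdeal m e st W → ⋃₀ T ⊆ W →
      (∀ W' : Set Q, PUCCIdeal m e st W' → ⋃₀ T ⊆ W' → W ⊆ W') →
      sSup W = ⨆ U ∈ T, sSup U) ∧
    -- ε preserves binary meets (intersections of compatibly closed ideals)
    (∀ U V : Set Q, PUCCIdeal m e st U → PUCCIdeal m e st V →
      PUCCIdeal m e st (U ∩ V) ∧ sSup (U ∩ V) = sSup U ⊓ sSup V) ∧
    -- ε turns the pointwise product into the quantale multiplication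
    (∀ U V : Set Q, PUCCIdeal m e st U → PUCCIdeal m e st V →
      sSup (Set.image2 m U V) = m (sSup U) (sSup V)) ∧
    -- ε maps the unit of ℒ_c(Π(Q)) to e
    (PUCCIdeal m e st {a : Q | IsPartialUnit m e st a ∧ a ≤ e} ∧
      sSup {a : Q | IsPartialUnit m e st a ∧ a ≤ e} = e) ∧
    -- ε intertwines pointwise inversion with the involution
    (∀ U : Set Q, PUCCIdeal m e st U → sSup (st '' U) = st (sSup U)) := by
  have hQ : IsUnitalInvolutiveQuantale m e st :=
    ⟨hassoc, hdistl, hdistr, hel, her, hstsup, hstst, hstm⟩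
  have hreg := hQ.le_mul_star_mul_of_support hsp2 hsp3
  refine ⟨⟨hQ.isPartialUnit_one, fun _ _ => hQ.isPartialUnit_mul, fun _ => hQ.isPartialUnit_star⟩,
    fun _ => hQ.isPartialUnit_sSup_of_pUCompatible hreg, fun s X => ⟨hdistl s X, hdistr s X⟩,
    fun a => ⟨_, hQ.pUCCIdeal_partialUnitsBelow hreg a, hQ.sSup_partialUnitsBelow hcover a⟩,
    fun _ _ => hQ.eq_of_sSup_eq_of_pUCCIdeal hreg, ?_,
    fun _ _ hU hV => ⟨hU.inter hV, hQ.sSup_inter_of_pUDwClosed hU.1 hV.1⟩,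
    fun U V _ _ => hQ.sSup_image2_mul U V,
    ⟨hQ.pUCCIdeal_partialUnitsBelow hreg e, hQ.sSup_partialUnitsBelow hcover e⟩,
    fun U _ => (hstsup U).symm⟩
  intro T W hT hW hTW hleast
  rw [← sSup_sUnion]
  exact hQ.sSup_eq_of_isLeast_pUCCIdeal hreg
    (fun _ ⟨U, hU, hx⟩ => (hT U hU).1.1 hx) ⟨⟨hW, hTW⟩, fun W' h => hleast W' h.1 h.2⟩

/-- for an inverse quantal frame `Q`, the partial units form an abstract
complete pseudogroup and `ε : ℒ_c(Π(Q)) → Q`, `ε U = ⨆ U`, is an isomorphism of unital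
involutive quantales (Theorem `thm:invqufr`). -/
theorem stmt_19 {Q : Type*} [Order.Frame Q]
    (m : Q → Q → Q) (e : Q) (st : Q → Q) (sp : Q → Q)
    (hassoc : ∀ a b c : Q, m (m a b) c = m a (m b c))
    (hdistl : ∀ (a : Q) (T : Set Q), m a (sSup T) = sSup ((fun b => m a b) '' T))
    (hdistr : ∀ (b : Q) (T : Set Q), m (sSup T) b = sSup ((fun a => m a b) '' T))
    (hel : ∀ a : Q, m e a = a) (her : ∀ a : Q, m a e = a)
    (hstsup : ∀ T : Set Q, st (sSup T) = sSup (st '' T))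
    (hstst : ∀ a : Q, st (st a) = a)
    (hstm : ∀ a b : Q, st (m a b) = m (st b) (st a))
    (hspsup : ∀ T : Set Q, sp (sSup T) = sSup (sp '' T))
    (hsp1 : ∀ a : Q, sp a ≤ e)
    (hsp2 : ∀ a : Q, sp a ≤ m a (st a))
    (hsp3 : ∀ a : Q, a ≤ m (sp a) a)
    (hcover : sSup {x : Q | IsPartialUnit m e st x} = ⊤) :
    -- Π(Q) is an abstract complete pseudogroup:
    -- it is closed under the unit, multiplication and involution,
    (IsPartialUnit m e st e ∧
      (∀ a b : Q, IsPartialUnit m e st a → IsPartialUnit m e st b →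
        IsPartialUnit m e st (m a b)) ∧
      (∀ a : Q, IsPartialUnit m e st a → IsPartialUnit m e st (st a))) ∧
    -- it is complete: the join (taken in Q) of a compatible set of partial units is a
    -- partial unit,
    (∀ X : Set Q, X ⊆ {a : Q | IsPartialUnit m e st a} →
      (∀ a ∈ X, ∀ b ∈ X, PUCompatible m st a b) → IsPartialUnit m e st (sSup X)) ∧
    -- and it is infinitely distributive
    (∀ (s : Q) (X : Set Q), m s (sSup X) = sSup ((fun x => m s x) '' X) ∧
      m (sSup X) s = sSup ((fun x => m x s) '' X)) ∧
    -- ε is a bijection from the compatibly closed ideals of Π(Q) onto Q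
    (∀ a : Q, ∃ U : Set Q, PUCCIdeal m e st U ∧ sSup U = a) ∧
    (∀ U V : Set Q, PUCCIdeal m e st U → PUCCIdeal m e st V →
      sSup U = sSup V → U = V) ∧
    -- ε preserves arbitrary suprema (the supremum in ℒ_c(Π(Q)) of a family T being the
    -- least compatibly closed ideal containing ⋃₀ T)
    (∀ (T : Set (Set Q)) (W : Set Q), (∀ U ∈ T, PUCCIdeal m e st U) →
      PUCCIdeal m e st W → ⋃₀ T ⊆ W →
      (∀ W' : Set Q, PUCCIdeal m e st W' → ⋃₀ T ⊆ W' → W ⊆ W') →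
      sSup W = ⨆ U ∈ T, sSup U) ∧
    -- ε preserves binary meets (intersections of compatibly closed ideals)
    (∀ U V : Set Q, PUCCIdeal m e st U → PUCCIdeal m e st V →
      PUCCIdeal m e st (U ∩ V) ∧ sSup (U ∩ V) = sSup U ⊓ sSup V) ∧
    -- ε turns the pointwise product into the quantale multiplication
    (∀ U V : Set Q, PUCCIdeal m e st U → PUCCIdeal m e st V →
      sSup (Set.image2 m U V) = m (sSup U) (sSup V)) ∧
    -- ε maps the unit of ℒ_c(Π(Q)) to e
    (PUCCIdeal m e st {a : Q | IsPartialUnit m e st a ∧ a ≤ e} ∧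
      sSup {a : Q | IsPartialUnit m e st a ∧ a ≤ e} = e) ∧
    -- ε intertwines pointwise inversion with the involution
    (∀ U : Set Q, PUCCIdeal m e st U → sSup (st '' U) = st (sSup U)) :=
  stmt_19_general m e st sp hassoc hdistl hdistr hel her hstsup hstst hstm hsp2 hsp3 hcover
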